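/- If there exist b > 0 and α_b > 0 such that limsup_{n→∞} (1/n) log P( |X̄_n − S| ≤ b ) ≤ −α_b, then limsup_{n→∞} (1/n) log P_e^{(n)} ≤ −min{ α_b, C_p b² }, where C_p = (1−2p)²/2. -/

import Mathlib

open MeasureTheory Filter Real ProbabilityTheory ExpGrowth

/-!
On the error event, `X̄ - S` and `Ȳ - (1 - 2p) S` have opposite signs, so
`|Ȳ - (1 - 2p) X̄| ≥ (1 - 2p) |X̄ - S|`: either `|X̄ - S| ≤ b`, or the measured average deviates
from its conditional mean `(1 - 2p) X̄` by at least `(1 - 2p) b`. Conditionally on `X = x` the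
`Y i` are independent with values in `[-1, 1]`, so by Hoeffding's inequality the second event has
probability at most `2 exp (-n (1 - 2p)² b² / 2)`, uniformly in `x`. Thus
`P_e ≤ P (|X̄ - S| ≤ b) + 2 exp (-C_p b² n)`, and the exponential growth rate of a sum is the
larger of the two rates.
-/

lemma ProbabilityTheory.HasSubgaussianMGF.measure_abs_ge_le {Ω : Type*} [MeasurableSpace Ω]
    {μ : Measure Ω} [IsFiniteMeasure μ] {X : Ω → ℝ} {c : NNReal} (h : HasSubgaussianMGF X c μ)
    {ε : ℝ} (hε : 0 ≤ ε) :
    μ.real {ω | ε ≤ |X ω|} ≤ 2 * exp (-ε ^ 2 / (2 * c)) := by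
  calc μ.real {ω | ε ≤ |X ω|} ≤ μ.real ({ω | ε ≤ X ω} ∪ {ω | ε ≤ (-X) ω}) := by
        refine measureReal_mono (fun ω hω => ?_)
        simpa [le_abs', or_comm, le_neg] using hω
    _ ≤ μ.real {ω | ε ≤ X ω} + μ.real {ω | ε ≤ (-X) ω} := measureReal_union_le _ _
    _ ≤ 2 * exp (-ε ^ 2 / (2 * c)) := by
        linarith [h.measure_ge_le hε, h.neg.measure_ge_le hε]

lemma measureReal_le_of_sum_cond_le {Ω α β : Type*} [MeasurableSpace Ω] [MeasurableSpace α]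
    [MeasurableSingletonClass α] [MeasurableSpace β] [MeasurableSingletonClass β]
    (P : Measure Ω) [IsProbabilityMeasure P] {f : Ω → α} {g : Ω → β}
    (hf : Measurable f) (hg : Measurable g) {s : Finset α} {s' : Finset β}
    (hfs : ∀ ω, f ω ∈ s) (hgs : ∀ ω, g ω ∈ s') (w : α → β → ℝ)
    (hw : ∀ a ∈ s, ∀ b ∈ s', P.real {ω | f ω = a ∧ g ω = b} = P.real {ω | f ω = a} * w a b)
    (C : α → β → Prop) [∀ a, DecidablePred (C a)] {δ : ℝ}
    (hC : ∀ a ∈ s, ∑ b ∈ s' with C a b, w a b ≤ δ) :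
    P.real {ω | C (f ω) (g ω)} ≤ δ := by
  have hevent : {ω | C (f ω) (g ω)} = (fun ω => (f ω, g ω)) ⁻¹' ↑{q ∈ s ×ˢ s' | C q.1 q.2} := by
    ext ω
    simp [hfs, hgs]
  have hmarginal : ∑ a ∈ s, P.real {ω | f ω = a} = 1 := by
    rw [← probReal_univ (μ := P), ← Set.preimage_eq_univ_iff.2 (Set.range_subset_iff.2 hfs)]
    exact sum_measureReal_preimage_singleton s (fun a _ => hf (measurableSet_singleton a))
  rw [hevent, ← sum_measureReal_preimage_singleton _
    (fun q _ => (hf.prodMk hg) (measurableSet_singleton q)), Finset.sum_filter,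
    Finset.sum_product]
  calc ∑ a ∈ s, ∑ b ∈ s', (if C a b then P.real ((fun ω => (f ω, g ω)) ⁻¹' {(a, b)}) else 0)
      = ∑ a ∈ s, P.real {ω | f ω = a} * ∑ b ∈ s' with C a b, w a b := by
        refine Finset.sum_congr rfl fun a ha => ?_
        rw [Finset.mul_sum, Finset.sum_filter]
        refine Finset.sum_congr rfl fun b hb => ?_
        simp only [Set.preimage, Set.mem_singleton_iff, Prod.ext_iff, hw a ha b hb]
    _ ≤ ∑ a ∈ s, P.real {ω | f ω = a} * δ :=
        Finset.sum_le_sum fun a ha => mul_le_mul_of_nonneg_left (hC a ha) measureReal_nonneg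
    _ = δ := by rw [← Finset.sum_mul, hmarginal, one_mul]

lemma mul_le_abs_sub_mul_of_mul_neg {u v c b : ℝ} (huv : u * v < 0) (hc : 0 ≤ c) (hb : b < |u|) :
    c * b ≤ |v - c * u| := by
  have hopp : c * |u| ≤ |v - c * u| := by
    rcases mul_neg_iff.1 huv with ⟨hu, hv⟩ | ⟨hu, hv⟩
    · rw [abs_of_pos hu, abs_of_neg (by nlinarith)]; linarith
    · rw [abs_of_neg hu, abs_of_pos (by nlinarith)]; linarith
  exact (mul_le_mul_of_nonneg_left hb.le hc).trans hopp

lemma natCast_mul_le_abs_sum_sub_of_mul_neg {n : ℕ} {x y : Fin n → ℝ} {S c b : ℝ} (hc : 0 ≤ c)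
    (herr : ((∑ i, x i) / n - S) * ((∑ i, y i) / n - c * S) < 0)
    (hb : b < |(∑ i, x i) / n - S|) :
    n * (c * b) ≤ |∑ i, (y i - c * x i)| := by
  have hsum : ∑ i, (y i - c * x i) = n * (((∑ i, y i) / n - c * S) - c * ((∑ i, x i) / n - S)) := by
    rcases n.eq_zero_or_pos with rfl | hn
    · simp
    · field_simp
      rw [Finset.sum_sub_distrib, ← Finset.mul_sum]
      ring
  rw [hsum, abs_mul, Nat.abs_cast]
  exact mul_le_mul_of_nonneg_left (mul_le_abs_sub_mul_of_mul_neg herr hc hb) n.cast_nonneg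

lemma limsup_inv_mul_log_eq_expGrowthSup (u : ℕ → ENNReal) :
    limsup (fun n : ℕ => (((n : ℝ)⁻¹ : ℝ) : EReal) * ENNReal.log (u n)) atTop =
      expGrowthSup u := by
  simp only [expGrowthSup, div_eq_mul_inv, mul_comm (ENNReal.log _), EReal.coe_inv,
    EReal.coe_natCast]

lemma expGrowthSup_mul_ofReal_exp_le {K : ENNReal} (hK : K ≠ ⊤) (β : ℝ) :
    expGrowthSup (fun n => K * ENNReal.ofReal (exp (-(β * n)))) ≤ ((-β : ℝ) : EReal) := by
  refine (expGrowthSup_le_of_eventually_le (v := fun n => EReal.exp (((-β : ℝ) : EReal) * n)) hK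
    (Eventually.of_forall fun n => ?_)).trans expGrowthSup_exp.le
  rw [← EReal.coe_natCast, ← EReal.coe_mul, EReal.exp_coe, neg_mul]

lemma expGrowthSup_le_of_le_add_exp {u v : ℕ → ENNReal} {K : ENNReal} (hK : K ≠ ⊤) {α β : ℝ}
    (hv : expGrowthSup v ≤ ((-α : ℝ) : EReal))
    (huv : ∀ᶠ n in atTop, u n ≤ v n + K * ENNReal.ofReal (exp (-(β * n)))) :
    expGrowthSup u ≤ ((-(min α β) : ℝ) : EReal) := by
  calc expGrowthSup u
      ≤ expGrowthSup (v + fun n : ℕ => K * ENNReal.ofReal (exp (-(β * n)))) :=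
        expGrowthSup_eventually_monotone huv
    _ = expGrowthSup v ⊔ expGrowthSup (fun n => K * ENNReal.ofReal (exp (-(β * n)))) :=
        expGrowthSup_add
    _ ≤ ((-α : ℝ) : EReal) ⊔ ((-β : ℝ) : EReal) :=
        sup_le_sup hv (expGrowthSup_mul_ofReal_exp_le hK β)
    _ = ((-(min α β) : ℝ) : EReal) := by
        rw [← max_neg_neg, Monotone.map_max EReal.coe_strictMono.monotone]

noncomputable def signVectors (ι : Type*) [Fintype ι] [DecidableEq ι] : Finset (ι → ℝ) :=
  Fintype.piFinset fun _ => {1, -1}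

lemma mem_signVectors {ι : Type*} [Fintype ι] [DecidableEq ι] {y : ι → ℝ} :
    y ∈ signVectors ι ↔ ∀ i, y i = 1 ∨ y i = -1 := by
  simp [signVectors]

/-- `flipLaw p a` is the law of a measured sentiment whose true sentiment is `a`, and `noisyLaw p x`
the conditional law of `Y` given `X = x`: the hypothesis `hjoint` of the theorem says
`P (X = x, Y = y) = P (X = x) * noisyLaw p x {y}`. -/
noncomputable def flipLaw (p a : ℝ) : Measure ℝ :=
  ENNReal.ofReal (1 - p) • Measure.dirac a + ENNReal.ofReal p • Measure.dirac (-a)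

section FlipLaw

variable {p : ℝ}

lemma isProbabilityMeasure_flipLaw (hp0 : 0 ≤ p) (hp1 : p ≤ 1) (a : ℝ) :
    IsProbabilityMeasure (flipLaw p a) := by
  constructor
  simp [flipLaw, ← ENNReal.ofReal_add (by linarith : 0 ≤ 1 - p) hp0]

lemma integral_flipLaw (hp0 : 0 ≤ p) (hp1 : p ≤ 1) (a : ℝ) :
    ∫ z, z ∂flipLaw p a = (1 - 2 * p) * a := by
  rw [flipLaw, integral_add_measure, integral_smul_measure, integral_smul_measure,
    integral_dirac, integral_dirac, ENNReal.toReal_ofReal (by linarith),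
    ENNReal.toReal_ofReal hp0]
  · simp; ring
  all_goals exact (integrable_dirac (by simp)).smul_measure ENNReal.ofReal_ne_top

lemma ae_flipLaw_mem_Icc {a : ℝ} (ha : |a| ≤ 1) : ∀ᵐ z ∂flipLaw p a, z ∈ Set.Icc (-1) 1 := by
  rw [flipLaw, ae_add_measure_iff]
  constructor <;> refine Measure.ae_smul_measure ?_ _ <;>
    simpa [ae_dirac_eq, neg_le, and_comm] using abs_le.1 ha

lemma hasSubgaussianMGF_flipLaw (hp0 : 0 ≤ p) (hp1 : p ≤ 1) {a : ℝ} (ha : |a| ≤ 1) :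
    HasSubgaussianMGF (fun z => z - (1 - 2 * p) * a) 1 (flipLaw p a) := by
  have := isProbabilityMeasure_flipLaw hp0 hp1 a
  have h := hasSubgaussianMGF_of_mem_Icc (μ := flipLaw p a) aemeasurable_id (ae_flipLaw_mem_Icc ha)
  simp only [id, integral_flipLaw hp0 hp1] at h
  convert h
  norm_num [← NNReal.coe_inj]

lemma flipLaw_real_singleton (hp0 : 0 ≤ p) (hp1 : p ≤ 1) {a z : ℝ} (ha : a = 1 ∨ a = -1)
    (hz : z = 1 ∨ z = -1) : (flipLaw p a).real {z} = if z = a then 1 - p else p := by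
  have h1p : 0 ≤ 1 - p := by linarith
  rcases ha with rfl | rfl <;> rcases hz with rfl | rfl <;>
    norm_num [flipLaw, measureReal_def, Measure.dirac_apply, ENNReal.toReal_ofReal, hp0, h1p]

end FlipLaw

noncomputable def noisyLaw {ι : Type*} [Fintype ι] (p : ℝ) (x : ι → ℝ) : Measure (ι → ℝ) :=
  Measure.pi fun i => flipLaw p (x i)

section NoisyLaw

variable {ι : Type*} [Fintype ι] {p : ℝ} {x : ι → ℝ}

lemma hasSubgaussianMGF_sum_noisyLaw (hp0 : 0 ≤ p) (hp1 : p ≤ 1) (hx : ∀ i, |x i| ≤ 1) :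
    HasSubgaussianMGF (fun y => ∑ i, (y i - (1 - 2 * p) * x i)) (Fintype.card ι)
      (noisyLaw p x) := by
  have := fun i => isProbabilityMeasure_flipLaw hp0 hp1 (x i)
  have h_indep := iIndepFun_pi (Ω := fun _ => ℝ) (𝓧 := fun _ => ℝ) (μ := fun i => flipLaw p (x i))
    (X := fun i (z : ℝ) => z - (1 - 2 * p) * x i) (fun i => by fun_prop)
  have h_subG : ∀ i ∈ Finset.univ, HasSubgaussianMGF (fun y : ι → ℝ => y i - (1 - 2 * p) * x i) 1
      (noisyLaw p x) := fun i _ => by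
    refine HasSubgaussianMGF.of_map (Y := fun y : ι → ℝ => y i)
      (X := fun z => z - (1 - 2 * p) * x i) (measurable_pi_apply i).aemeasurable ?_
    rw [noisyLaw, (measurePreserving_eval _ i).map_eq]
    exact hasSubgaussianMGF_flipLaw hp0 hp1 (hx i)
  simpa [noisyLaw] using HasSubgaussianMGF.sum_of_iIndepFun h_indep h_subG

lemma noisyLaw_real_singleton (hp0 : 0 ≤ p) (hp1 : p ≤ 1) (hx : ∀ i, x i = 1 ∨ x i = -1)
    {y : ι → ℝ} (hy : ∀ i, y i = 1 ∨ y i = -1) :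
    (noisyLaw p x).real {y} = ∏ i, if y i = x i then 1 - p else p := by
  have := fun i => isProbabilityMeasure_flipLaw hp0 hp1 (x i)
  rw [measureReal_def, noisyLaw, Measure.pi_singleton, ENNReal.toReal_prod]
  exact Finset.prod_congr rfl fun i _ => flipLaw_real_singleton hp0 hp1 (hx i) (hy i)

end NoisyLaw

lemma sum_prod_flip_deviation_le {ι : Type*} [Fintype ι] [DecidableEq ι] {p : ℝ} (hp0 : 0 ≤ p)
    (hp1 : p ≤ 1) {x : ι → ℝ} (hx : ∀ i, x i = 1 ∨ x i = -1) {t : ℝ} (ht : 0 ≤ t) :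
    ∑ y ∈ signVectors ι with t ≤ |∑ i, (y i - (1 - 2 * p) * x i)|,
        ∏ i, (if y i = x i then 1 - p else p)
      ≤ 2 * exp (-t ^ 2 / (2 * Fintype.card ι)) := by
  have := fun i => isProbabilityMeasure_flipLaw hp0 hp1 (x i)
  have : IsProbabilityMeasure (noisyLaw p x) := by rw [noisyLaw]; infer_instance
  calc _ = ∑ y ∈ signVectors ι with t ≤ |∑ i, (y i - (1 - 2 * p) * x i)|,
        (noisyLaw p x).real {y} :=
        Finset.sum_congr rfl fun y hy => (noisyLaw_real_singleton hp0 hp1 hx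
          (mem_signVectors.1 (Finset.mem_filter.1 hy).1)).symm
    _ ≤ (noisyLaw p x).real {y | t ≤ |∑ i, (y i - (1 - 2 * p) * x i)|} := by
        rw [sum_measureReal_singleton]
        exact measureReal_mono (fun y hy => (Finset.mem_filter.1 hy).2)
    _ ≤ _ := by
        simpa using (hasSubgaussianMGF_sum_noisyLaw hp0 hp1
          (fun i => by rcases hx i with h | h <;> simp [h])).measure_abs_ge_le ht

lemma measureReal_noisy_deviation_le {Ω ι : Type*} [MeasurableSpace Ω] [Fintype ι] [DecidableEq ι]
    (P : Measure Ω) [IsProbabilityMeasure P] {p : ℝ} (hp0 : 0 ≤ p) (hp1 : p ≤ 1)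
    {X Y : Ω → ι → ℝ} (hXval : ∀ ω i, X ω i = 1 ∨ X ω i = -1)
    (hYval : ∀ ω i, Y ω i = 1 ∨ Y ω i = -1) (hXmeas : Measurable X) (hYmeas : Measurable Y)
    (hjoint : ∀ x y : ι → ℝ, (∀ i, x i = 1 ∨ x i = -1) → (∀ i, y i = 1 ∨ y i = -1) →
      (P {ω | X ω = x ∧ Y ω = y}).toReal
        = (P {ω | X ω = x}).toReal * ∏ i, (if y i = x i then 1 - p else p))
    {t : ℝ} (ht : 0 ≤ t) :
    P.real {ω | t ≤ |∑ i, (Y ω i - (1 - 2 * p) * X ω i)|}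
      ≤ 2 * exp (-t ^ 2 / (2 * Fintype.card ι)) :=
  measureReal_le_of_sum_cond_le P hXmeas hYmeas (s := signVectors ι) (s' := signVectors ι)
    (fun ω => mem_signVectors.2 (hXval ω)) (fun ω => mem_signVectors.2 (hYval ω)) _
    (fun x hx y hy => hjoint x y (mem_signVectors.1 hx) (mem_signVectors.1 hy))
    (fun x y => t ≤ |∑ i, (y i - (1 - 2 * p) * x i)|)
    (fun _ hx => sum_prod_flip_deviation_le hp0 hp1 (mem_signVectors.1 hx) ht)

lemma measure_supermajority_error_le {Ω : Type*} [MeasurableSpace Ω] (P : Measure Ω)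
    [IsProbabilityMeasure P] {n : ℕ} {p S b : ℝ} (hp0 : 0 ≤ p) (hp1 : p ≤ 1 / 2) (hb : 0 ≤ b)
    {X Y : Ω → Fin n → ℝ} (hXval : ∀ ω i, X ω i = 1 ∨ X ω i = -1)
    (hYval : ∀ ω i, Y ω i = 1 ∨ Y ω i = -1) (hXmeas : Measurable X) (hYmeas : Measurable Y)
    (hjoint : ∀ x y : Fin n → ℝ, (∀ i, x i = 1 ∨ x i = -1) → (∀ i, y i = 1 ∨ y i = -1) →
      (P {ω | X ω = x ∧ Y ω = y}).toReal
        = (P {ω | X ω = x}).toReal * ∏ i, (if y i = x i then 1 - p else p)) :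
    P {ω | ((∑ i, X ω i) / n - S) * ((∑ i, Y ω i) / n - (1 - 2 * p) * S) < 0}
      ≤ P {ω | |(∑ i, X ω i) / n - S| ≤ b}
        + 2 * ENNReal.ofReal (exp (-((1 - 2 * p) ^ 2 / 2 * b ^ 2 * n))) := by
  have hc : 0 ≤ 1 - 2 * p := by linarith
  have hdev := measureReal_noisy_deviation_le P hp0 (by linarith) hXval hYval hXmeas hYmeas hjoint
    (t := n * ((1 - 2 * p) * b)) (by positivity)
  have hexponent : -(n * ((1 - 2 * p) * b)) ^ 2 / (2 * Fintype.card (Fin n))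
      = -((1 - 2 * p) ^ 2 / 2 * b ^ 2 * n) := by
    rcases n.eq_zero_or_pos with rfl | hn
    · simp
    · rw [Fintype.card_fin]; field_simp
  calc _ ≤ P ({ω | |(∑ i, X ω i) / n - S| ≤ b}
          ∪ {ω | n * ((1 - 2 * p) * b) ≤ |∑ i, (Y ω i - (1 - 2 * p) * X ω i)|}) := by
        refine measure_mono fun ω herr => ?_
        by_cases hA : |(∑ i, X ω i) / n - S| ≤ b
        · exact Or.inl hA
        · exact Or.inr (natCast_mul_le_abs_sum_sub_of_mul_neg hc herr (not_le.1 hA))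
    _ ≤ _ := measure_union_le _ _
    _ ≤ _ := by
        gcongr
        rw [← ENNReal.ofReal_toReal (measure_ne_top P _), ← hexponent, ← ENNReal.ofReal_ofNat,
          ← ENNReal.ofReal_mul zero_le_two]
        exact ENNReal.ofReal_le_ofReal hdev

theorem supermajority_error_exponential_decay_general
    {Ω : Type*} [MeasurableSpace Ω] (P : Measure Ω) [IsProbabilityMeasure P]
    (p S : ℝ) (hp0 : 0 < p) (hp1 : p < 1 / 2)
    (X Y : (n : ℕ) → Ω → Fin n → ℝ)
    (hXval : ∀ n ω i, X n ω i = 1 ∨ X n ω i = -1)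
    (hYval : ∀ n ω i, Y n ω i = 1 ∨ Y n ω i = -1)
    (hXmeas : ∀ n, Measurable (X n))
    (hYmeas : ∀ n, Measurable (Y n))
    (hjoint : ∀ n (x y : Fin n → ℝ), (∀ i, x i = 1 ∨ x i = -1) →
      (∀ i, y i = 1 ∨ y i = -1) →
      (P {ω | X n ω = x ∧ Y n ω = y}).toReal
        = (P {ω | X n ω = x}).toReal * ∏ i, (if y i = x i then 1 - p else p))
    (b αb : ℝ) (hb : 0 < b)
    (hdev : limsup (fun n : ℕ =>
        (((n : ℝ)⁻¹ : ℝ) : EReal) * ENNReal.log (P {ω | |(∑ i, X n ω i) / n - S| ≤ b}))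
        atTop ≤ ((-αb : ℝ) : EReal)) :
    limsup (fun n : ℕ =>
        (((n : ℝ)⁻¹ : ℝ) : EReal) * ENNReal.log
          (P {ω | ((∑ i, X n ω i) / n - S) * ((∑ i, Y n ω i) / n - (1 - 2 * p) * S) < 0}))
      atTop ≤ ((-(min αb ((1 - 2 * p) ^ 2 / 2 * b ^ 2)) : ℝ) : EReal) := by
  rw [limsup_inv_mul_log_eq_expGrowthSup] at hdev ⊢
  exact expGrowthSup_le_of_le_add_exp ENNReal.ofNat_ne_top hdev <| .of_forall fun n =>
    measure_supermajority_error_le P hp0.le hp1.le hb.le (hXval n) (hYval n) (hXmeas n)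
      (hYmeas n) (hjoint n)

/-- In the sentiment detection model, if there exist `b > 0` and `α_b > 0`
such that `limsup_{n→∞} (1/n) log P(|X̄_n - S| ≤ b) ≤ -α_b`, then
`limsup_{n→∞} (1/n) log P_e^{(n)} ≤ -min{α_b, C_p b²}` with `C_p = (1-2p)²/2`
(logarithms of probabilities are taken in the extended reals, so `log 0 = -∞`). -/
theorem supermajority_error_exponential_decay
    {Ω : Type*} [MeasurableSpace Ω] (P : Measure Ω) [IsProbabilityMeasure P]
    (p S : ℝ) (hp0 : 0 < p) (hp1 : p < 1 / 2) (hS0 : -1 < S) (hS1 : S < 1)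
    (X Y : (n : ℕ) → Ω → Fin n → ℝ)
    (hXval : ∀ n ω i, X n ω i = 1 ∨ X n ω i = -1)
    (hYval : ∀ n ω i, Y n ω i = 1 ∨ Y n ω i = -1)
    (hXmeas : ∀ n, Measurable (X n))
    (hYmeas : ∀ n, Measurable (Y n))
    (hjoint : ∀ n (x y : Fin n → ℝ), (∀ i, x i = 1 ∨ x i = -1) →
      (∀ i, y i = 1 ∨ y i = -1) →
      (P {ω | X n ω = x ∧ Y n ω = y}).toReal
        = (P {ω | X n ω = x}).toReal * ∏ i, (if y i = x i then 1 - p else p))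
    (b αb : ℝ) (hb : 0 < b) (hαb : 0 < αb)
    (hdev : limsup (fun n : ℕ =>
        (((n : ℝ)⁻¹ : ℝ) : EReal) * ENNReal.log (P {ω | |(∑ i, X n ω i) / n - S| ≤ b}))
        atTop ≤ ((-αb : ℝ) : EReal)) :
    limsup (fun n : ℕ =>
        (((n : ℝ)⁻¹ : ℝ) : EReal) * ENNReal.log
          (P {ω | ((∑ i, X n ω i) / n - S) * ((∑ i, Y n ω i) / n - (1 - 2 * p) * S) < 0}))
      atTop ≤ ((-(min αb ((1 - 2 * p) ^ 2 / 2 * b ^ 2)) : ℝ) : EReal) :=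
  supermajority_error_exponential_decay_general P p S hp0 hp1 X Y hXval hYval hXmeas hYmeas hjoint b
    αb hb hdev
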